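/- arXiv:math/0504229 — 3 statements merged into one kernel-verified Lean document; each statement's English description precedes it below -/
import Mathlib

section
/- Suppose f¹,…,f^k, g¹,…,g^ℓ and f̂¹,…,f̂^k̂, ĝ¹,…,ĝ^ℓ̂ are two families of linearly independent vectors in a finite-dimensional complex vector space V satisfying Σᵢ fⁱ ⊗ conj(fⁱ) − Σⱼ gʲ ⊗ conj(gʲ) = Σᵢ f̂ⁱ ⊗ conj(f̂ⁱ) − Σⱼ ĝʲ ⊗ conj(ĝʲ) in V ⊗ conj(V). Then span{f¹,…,f^k, g¹,…,g^ℓ} = span{f̂¹,…,f̂^k̂, ĝ¹,…,ĝ^ℓ̂}. -/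
/-!
A functional `φ` lies in the radical of the Hermitian form
`(φ, ψ) ↦ ∑ φ(fⁱ) conj ψ(fⁱ) - ∑ φ(gʲ) conj ψ(gʲ)` on the dual space exactly when it annihilates
`span {fⁱ, gʲ}`: testing against the functionals dual to the linearly independent vectors reads off
each `φ(fⁱ)` and `φ(gʲ)`. So the annihilator of the span, and hence the span itself, is determined by
the form.
-/

open Finset ComplexConjugate

theorem LinearIndependent.exists_dual_apply_eq_single {ι K V : Type*} [Field K] [AddCommGroup V]
    [Module K V] {v : ι → V} (hv : LinearIndependent K v) (i : ι) :
    ∃ ψ : Module.Dual K V, ∀ j, ψ (v j) = Finsupp.single i 1 j := by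
  classical
  obtain ⟨ψ, hψ⟩ := LinearMap.exists_extend ((Finsupp.lapply i).comp hv.repr)
  refine ⟨ψ, fun j => ?_⟩
  have := LinearMap.congr_fun hψ ⟨v j, Submodule.subset_span (Set.mem_range_self j)⟩
  simp only [LinearMap.comp_apply, Submodule.subtype_apply] at this
  rw [this, hv.repr_eq_single j _ rfl, Finsupp.lapply_apply, Finsupp.single_apply,
    Finsupp.single_apply]
  simp only [eq_comm]

theorem LinearIndependent.eq_zero_of_forall_sum_mul_conj_dual_eq_zero {ι V : Type*} [Fintype ι]
    [AddCommGroup V] [Module ℂ V] {v : ι → V} (hv : LinearIndependent ℂ v) {c : ι → ℂ}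
    (h : ∀ ψ : Module.Dual ℂ V, ∑ i, c i * conj (ψ (v i)) = 0) : c = 0 := by
  classical
  funext i
  obtain ⟨ψ, hψ⟩ := hv.exists_dual_apply_eq_single i
  simpa [hψ, Finsupp.single_apply, apply_ite conj] using h ψ

section HermitianForm

variable {ι κ V : Type*} [Fintype ι] [Fintype κ] [AddCommGroup V] [Module ℂ V]

/-- The form on `Module.Dual ℂ V` induced by `∑ fⁱ ⊗ conj fⁱ - ∑ gʲ ⊗ conj gʲ ∈ V ⊗ conj V`. -/
def hermitianForm (f : ι → V) (g : κ → V) (φ ψ : Module.Dual ℂ V) : ℂ :=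
  ∑ i, φ (f i) * conj (ψ (f i)) - ∑ j, φ (g j) * conj (ψ (g j))

theorem forall_hermitianForm_eq_zero_iff {f : ι → V} {g : κ → V}
    (hfg : LinearIndependent ℂ (Sum.elim f g)) (φ : Module.Dual ℂ V) :
    (∀ ψ, hermitianForm f g φ ψ = 0) ↔
      φ ∈ (Submodule.span ℂ (Set.range f ∪ Set.range g)).dualAnnihilator := by
  rw [← SetLike.mem_coe, Submodule.coe_dualAnnihilator_span, Set.mem_ofPred_eq,
    Set.union_subset_iff, Set.range_subset_iff, Set.range_subset_iff]
  simp only [SetLike.mem_coe, LinearMap.mem_ker]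
  constructor
  · intro h
    have hc := hfg.eq_zero_of_forall_sum_mul_conj_dual_eq_zero
      (c := Sum.elim (φ ∘ f) (-(φ ∘ g))) fun ψ => by
        simpa [Fintype.sum_sum_type, hermitianForm, sub_eq_add_neg] using h ψ
    exact ⟨fun i => by simpa using congr_fun hc (.inl i),
      fun j => by simpa using congr_fun hc (.inr j)⟩
  · rintro ⟨hf, hg⟩ ψ
    simp [hermitianForm, hf, hg]

end HermitianForm

theorem stmt_2_general {V : Type*} [AddCommGroup V] [Module ℂ V]
    {k ℓ k' ℓ' : ℕ} (f : Fin k → V) (g : Fin ℓ → V) (f' : Fin k' → V) (g' : Fin ℓ' → V)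
    (hfg : LinearIndependent ℂ (Sum.elim f g))
    (hfg' : LinearIndependent ℂ (Sum.elim f' g'))
    (heq : ∀ φ ψ : Module.Dual ℂ V,
      ∑ i, φ (f i) * conj (ψ (f i)) - ∑ j, φ (g j) * conj (ψ (g j)) =
        ∑ i, φ (f' i) * conj (ψ (f' i)) - ∑ j, φ (g' j) * conj (ψ (g' j))) :
    Submodule.span ℂ (Set.range f ∪ Set.range g) =
      Submodule.span ℂ (Set.range f' ∪ Set.range g') := by
  have hform : hermitianForm f g = hermitianForm f' g' := funext₂ heq
  rw [← Subspace.dualAnnihilator_inj]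
  ext φ
  rw [← forall_hermitianForm_eq_zero_iff hfg, ← forall_hermitianForm_eq_zero_iff hfg', hform]

theorem stmt_2 {V : Type*} [AddCommGroup V] [Module ℂ V] [FiniteDimensional ℂ V]
    {k ℓ k' ℓ' : ℕ} (f : Fin k → V) (g : Fin ℓ → V) (f' : Fin k' → V) (g' : Fin ℓ' → V)
    (hfg : LinearIndependent ℂ (Sum.elim f g))
    (hfg' : LinearIndependent ℂ (Sum.elim f' g'))
    (heq : ∀ φ ψ : Module.Dual ℂ V,
      ∑ i, φ (f i) * conj (ψ (f i)) - ∑ j, φ (g j) * conj (ψ (g j)) =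
        ∑ i, φ (f' i) * conj (ψ (f' i)) - ∑ j, φ (g' j) * conj (ψ (g' j))) :
    Submodule.span ℂ (Set.range f ∪ Set.range g) =
      Submodule.span ℂ (Set.range f' ∪ Set.range g') :=
  stmt_2_general f g f' g' hfg hfg' heq
end

section
/- The bihomogeneous polynomial P(z₀,z₁) = (|z₀|² − |z₁|²)² on ℂ² is not a quotient of squared norms: there do not exist nonempty finite families of homogeneous polynomials (s^γ), with not all s^γ identically zero, and (T^δ) on ℂ² such that P(z)·Σ_γ |s^γ(z)|² = Σ_δ |T^δ(z)|² for all z ∈ ℂ². -/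
/-!
Restricting the identity to the real hypersurface `‖z₀‖ = ‖z₁‖`, where `P` vanishes, kills every
`T δ` there. That hypersurface is Zariski dense in `ℂ²` (over each `z₀ ≠ 0` it contains a whole
circle), so all `T δ` vanish identically. Then `P · ∑ |s γ|² = 0`, so every `s γ` vanishes on the
complement of the hypersurface, which is again Zariski dense, and hence `s γ = 0`.
-/

open Finset Metric

namespace MvPolynomial

variable {R : Type*} [CommRing R] [IsDomain R]

theorem eq_zero_of_eval_cons_eq_zero {n : ℕ} {p : MvPolynomial (Fin (n + 1)) R}
    {A : Set R} (hA : A.Infinite) {B : R → Fin n → Set R} (hB : ∀ x ∈ A, ∀ i, (B x i).Infinite)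
    (h : ∀ x ∈ A, ∀ y ∈ Set.pi .univ (B x), eval (Fin.cons x y) p = 0) : p = 0 := by
  apply (finSuccEquiv R n).injective
  rw [map_zero]
  refine Polynomial.eq_zero_of_infinite_isRoot _ ((hA.image (C_injective ..).injOn).mono ?_)
  rintro _ ⟨x, hx, rfl⟩
  refine funext_set (B x) (hB x hx) fun y hy => ?_
  rw [eval_polynomial_eval_finSuccEquiv, eval_C, map_zero]
  exact h x hx y hy

end MvPolynomial

theorem sum_norm_sq_eq_zero_iff {ι E : Type*} [Fintype ι] [NormedAddGroup E] {f : ι → E} :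
    ∑ i, ‖f i‖ ^ 2 = 0 ↔ ∀ i, f i = 0 := by
  simp [sum_eq_zero_iff_of_nonneg fun i _ => sq_nonneg ‖f i‖]

theorem Complex.infinite_sphere_zero {r : ℝ} (hr : 0 < r) : (sphere (0 : ℂ) r).Infinite := by
  refine (isPreconnected_sphere (by simp [Complex.rank_real_complex]) 0 r).infinite_of_nontrivial
    ⟨r, by simp [hr.le], -r, by simp [hr.le], ?_⟩
  exact_mod_cast (neg_ne_self.mpr hr.ne').symm

theorem infinite_compl_sphere {E : Type*} [NormedAddCommGroup E] [NormedSpace ℝ E] [Nontrivial E]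
    (x : E) (r : ℝ) : (sphere x r)ᶜ.Infinite := fun hfin =>
  NormedSpace.unbounded_univ ℝ E <| by
    simpa using (isBounded_sphere (x := x) (r := r)).union hfin.isBounded

open MvPolynomial

theorem eq_zero_of_eval_eq_zero_of_norm_eq {p : MvPolynomial (Fin 2) ℂ}
    (h : ∀ z : Fin 2 → ℂ, ‖z 0‖ = ‖z 1‖ → eval z p = 0) : p = 0 :=
  eq_zero_of_eval_cons_eq_zero (A := {0}ᶜ) (B := fun x _ => sphere 0 ‖x‖)
    (Set.finite_singleton 0).infinite_compl
    (fun x hx _ => Complex.infinite_sphere_zero (norm_pos_iff.mpr hx))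
    fun x _ y hy => h _ (by simpa using (hy 0 trivial).symm)

theorem eq_zero_of_eval_eq_zero_of_norm_ne {p : MvPolynomial (Fin 2) ℂ}
    (h : ∀ z : Fin 2 → ℂ, ‖z 0‖ ≠ ‖z 1‖ → eval z p = 0) : p = 0 :=
  eq_zero_of_eval_cons_eq_zero (A := .univ) (B := fun x _ => (sphere 0 ‖x‖)ᶜ) Set.infinite_univ
    (fun _ _ _ => infinite_compl_sphere _ _)
    fun x _ y hy => h _ (by simpa [eq_comm] using hy 0 trivial)

theorem stmt_6 :
    ¬ ∃ (M M' : ℕ) (s : Fin M → MvPolynomial (Fin 2) ℂ)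
        (T : Fin M' → MvPolynomial (Fin 2) ℂ),
      (∀ γ, ∃ e, (s γ).IsHomogeneous e) ∧
      (∃ γ, s γ ≠ 0) ∧
      (∀ δ, ∃ e, (T δ).IsHomogeneous e) ∧
      ∀ z : Fin 2 → ℂ,
        (‖z 0‖ ^ 2 - ‖z 1‖ ^ 2) ^ 2 * ∑ γ, ‖MvPolynomial.eval z (s γ)‖ ^ 2 =
          ∑ δ, ‖MvPolynomial.eval z (T δ)‖ ^ 2 := by
  rintro ⟨M, M', s, T, -, ⟨γ, hγ⟩, -, hP⟩
  have hT (δ) : T δ = 0 := eq_zero_of_eval_eq_zero_of_norm_eq fun z hz => by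
    have hPz := hP z
    rw [hz, sub_self, zero_pow two_ne_zero, zero_mul, eq_comm, sum_norm_sq_eq_zero_iff] at hPz
    exact hPz δ
  refine hγ (eq_zero_of_eval_eq_zero_of_norm_ne fun z hz => ?_)
  have hPz : (‖z 0‖ ^ 2 - ‖z 1‖ ^ 2) ^ 2 * ∑ γ, ‖eval z (s γ)‖ ^ 2 = 0 := by
    simpa [hT] using hP z
  have hP_ne : (‖z 0‖ ^ 2 - ‖z 1‖ ^ 2) ^ 2 ≠ 0 := by
    simpa [sub_eq_zero, sq_eq_sq₀] using hz
  exact sum_norm_sq_eq_zero_iff.mp ((mul_eq_zero.mp hPz).resolve_left hP_ne) γ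
end

section
/- Let f : Ω → ℂ^k and g : Ω → ℂ^ℓ with P = ‖f‖² − ‖g‖² ≥ 0 on Ω. Then (‖f‖² + ‖g‖²)/P is uniformly bounded on Ω ∖ {P = 0} if and only if for every vector c ∈ ℂ^k and d ∈ ℂ^ℓ, the function |⟨f, c⟩ + ⟨g, d⟩|²/P is uniformly bounded on Ω ∖ {P = 0}. -/
/-! By Cauchy–Schwarz on the concatenated vector `(f, g)`,
`|⟨f, c⟩ + ⟨g, d⟩|² ≤ (‖f‖² + ‖g‖²)(‖c‖² + ‖d‖²)`, which gives the forward direction.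
Conversely, taking `(c, d)` to be the standard basis vectors bounds each `|fⁱ|² / P`
and `|gʲ|² / P`, and `(‖f‖² + ‖g‖²) / P` is their finite sum. -/

open Finset ComplexConjugate

section Pairing

variable {𝕜 ι κ : Type*} [RCLike 𝕜] [Fintype ι] [Fintype κ]

theorem norm_sum_mul_conj_sq_le (x c : ι → 𝕜) :
    ‖∑ i, x i * conj (c i)‖ ^ 2 ≤ (∑ i, ‖x i‖ ^ 2) * ∑ i, ‖c i‖ ^ 2 :=
  calc ‖∑ i, x i * conj (c i)‖ ^ 2 ≤ (∑ i, ‖x i‖ * ‖c i‖) ^ 2 := by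
        gcongr
        refine (norm_sum_le _ _).trans_eq ?_
        simp only [norm_mul, RCLike.norm_conj]
    _ ≤ (∑ i, ‖x i‖ ^ 2) * ∑ i, ‖c i‖ ^ 2 := sum_mul_sq_le_sq_mul_sq _ _ _

theorem norm_sum_add_sum_mul_conj_sq_le (x : ι → 𝕜) (y : κ → 𝕜) (c : ι → 𝕜) (d : κ → 𝕜) :
    ‖∑ i, x i * conj (c i) + ∑ j, y j * conj (d j)‖ ^ 2 ≤
      (∑ i, ‖x i‖ ^ 2 + ∑ j, ‖y j‖ ^ 2) * (∑ i, ‖c i‖ ^ 2 + ∑ j, ‖d j‖ ^ 2) := by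
  simpa only [Fintype.sum_sum_type, Sum.elim_inl, Sum.elim_inr] using
    norm_sum_mul_conj_sq_le (Sum.elim x y) (Sum.elim c d)

theorem sum_mul_conj_single [DecidableEq ι] (x : ι → 𝕜) (j : ι) :
    ∑ i, x i * conj ((Pi.single j 1 : ι → 𝕜) i) = x j := by
  simp [Pi.single_apply, apply_ite (conj : 𝕜 → 𝕜)]

end Pairing

theorem exists_forall_sum_le {α ι : Type*} [Fintype ι] {p : α → Prop} {u : ι → α → ℝ}
    (h : ∀ i, ∃ C, ∀ z, p z → u i z ≤ C) : ∃ C, ∀ z, p z → ∑ i, u i z ≤ C := by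
  choose C hC using h
  exact ⟨∑ i, C i, fun z hz => sum_le_sum fun i _ => hC i z hz⟩

theorem stmt_9_general {n k ℓ : ℕ} (Ω : Set (Fin n → ℂ))
    (f : (Fin n → ℂ) → Fin k → ℂ) (g : (Fin n → ℂ) → Fin ℓ → ℂ)
    (P : (Fin n → ℂ) → ℝ)
    (hpos : ∀ z ∈ Ω, 0 ≤ P z) :
    (∃ C : ℝ, ∀ z ∈ Ω, P z ≠ 0 →
        (∑ i, ‖f z i‖ ^ 2 + ∑ j, ‖g z j‖ ^ 2) / P z ≤ C) ↔
      (∀ (c : Fin k → ℂ) (d : Fin ℓ → ℂ), ∃ C : ℝ, ∀ z ∈ Ω, P z ≠ 0 →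
        ‖∑ i, f z i * conj (c i) + ∑ j, g z j * conj (d j)‖ ^ 2 / P z ≤ C) := by
  constructor
  · rintro ⟨C, hC⟩ c d
    set K := ∑ i, ‖c i‖ ^ 2 + ∑ j, ‖d j‖ ^ 2
    have hK : 0 ≤ K := by positivity
    refine ⟨C * K, fun z hz hPz => ?_⟩
    calc ‖∑ i, f z i * conj (c i) + ∑ j, g z j * conj (d j)‖ ^ 2 / P z
        ≤ (∑ i, ‖f z i‖ ^ 2 + ∑ j, ‖g z j‖ ^ 2) * K / P z := by
          gcongr
          · exact hpos z hz
          · exact norm_sum_add_sum_mul_conj_sq_le _ _ _ _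
      _ = (∑ i, ‖f z i‖ ^ 2 + ∑ j, ‖g z j‖ ^ 2) / P z * K := div_mul_eq_mul_div _ _ _ |>.symm
      _ ≤ C * K := by gcongr; exact hC z hz hPz
  · intro h
    have hcoord : ∀ a : Fin k ⊕ Fin ℓ, ∃ C, ∀ z, (z ∈ Ω ∧ P z ≠ 0) →
        Sum.elim (fun i => ‖f z i‖ ^ 2 / P z) (fun j => ‖g z j‖ ^ 2 / P z) a ≤ C := by
      rintro (i | j)
      · obtain ⟨C, hC⟩ := h (Pi.single i 1) 0
        refine ⟨C, fun z ⟨hz, hPz⟩ => ?_⟩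
        simpa [sum_mul_conj_single] using hC z hz hPz
      · obtain ⟨C, hC⟩ := h 0 (Pi.single j 1)
        refine ⟨C, fun z ⟨hz, hPz⟩ => ?_⟩
        simpa [sum_mul_conj_single] using hC z hz hPz
    obtain ⟨C, hC⟩ := exists_forall_sum_le hcoord
    refine ⟨C, fun z hz hPz => ?_⟩
    simpa only [add_div, sum_div, Fintype.sum_sum_type, Sum.elim_inl, Sum.elim_inr] using
      hC z ⟨hz, hPz⟩

theorem stmt_9 {n k ℓ : ℕ} (Ω : Set (Fin n → ℂ))
    (f : (Fin n → ℂ) → Fin k → ℂ) (g : (Fin n → ℂ) → Fin ℓ → ℂ)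
    (P : (Fin n → ℂ) → ℝ)
    (hP : ∀ z, P z = ∑ i, ‖f z i‖ ^ 2 - ∑ j, ‖g z j‖ ^ 2)
    (hpos : ∀ z ∈ Ω, 0 ≤ P z) :
    (∃ C : ℝ, ∀ z ∈ Ω, P z ≠ 0 →
        (∑ i, ‖f z i‖ ^ 2 + ∑ j, ‖g z j‖ ^ 2) / P z ≤ C) ↔
      (∀ (c : Fin k → ℂ) (d : Fin ℓ → ℂ), ∃ C : ℝ, ∀ z ∈ Ω, P z ≠ 0 →
        ‖∑ i, f z i * conj (c i) + ∑ j, g z j * conj (d j)‖ ^ 2 / P z ≤ C) :=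
  stmt_9_general Ω f g P hpos
end
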